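/- Let A, R, Q be n×n real matrices with R and Q positive definite, define H(d) = Σ_{i=0}^{d−1} A^i R (A^i)ᵀ, and let ρ(A) denote the spectral radius of A (the maximum modulus of its complex eigenvalues). Then for any g ∈ (0,1) and any natural number l₀ ≥ 1, the series Σ_{i=1}^∞ g^i Tr(Q·H(i·l₀)) converges if and only if g·ρ(A)^{2l₀} < 1. -/

import Mathlib

open Matrix

/-- `covH A R d = ∑_{i=0}^{d-1} Aⁱ R (Aⁱ)ᵀ`, the state covariance matrix at
age-of-information `d`. -/
noncomputable def covH {n : ℕ} (A R : Matrix (Fin n) (Fin n) ℝ) (d : ℕ) :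
    Matrix (Fin n) (Fin n) ℝ :=
  ∑ i ∈ Finset.range d, A ^ i * R * (A ^ i)ᵀ

/-- The spectral radius of a real matrix: the maximum modulus of its complex
eigenvalues. -/
noncomputable def specRad {n : ℕ} (A : Matrix (Fin n) (Fin n) ℝ) : ℝ :=
  sSup ((fun z : ℂ => ‖z‖) '' spectrum ℂ (A.map Complex.ofReal))

/-!
Write `t j = Tr(Q Aʲ R (Aʲ)ᵀ)`, so that the `i`-th term of the series is
`gⁱ⁺¹ ∑_{j < (i+1) l₀} t j`. With the invertible square roots `S = √Q`, `U = √R` one has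
`t j = ‖S Aʲ U‖²` (Frobenius norm), so `t j` is comparable to `‖Aʲ‖²`. The spectral mapping
theorem gives `ρ(A)ʲ ≲ ‖Aʲ‖`, and Gelfand's formula gives `‖Aʲ‖ ≲ rʲ` for every `r > ρ(A)`.
If `g ρ(A)^(2 l₀) < 1`, pick `r > max ρ(A) 1` with `g r^(2 l₀) < 1`: the terms are then at most a
multiple of `(i+1) (g r^(2 l₀))^(i+1)`. Otherwise the last summand alone keeps every term above
a positive constant, so the terms do not tend to zero.
-/

open Filter Topology Finset

attribute [local instance] Matrix.frobeniusNormedAddCommGroup Matrix.frobeniusNormedSpace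
  Matrix.frobeniusNormedRing Matrix.frobeniusNormedAlgebra

theorem spectrum.exists_norm_pow_le_mul_pow_of_spectralRadius_lt {𝓐 : Type*} [NormedRing 𝓐]
    [NormedAlgebra ℂ 𝓐] [CompleteSpace 𝓐] {a : 𝓐} {r : ℝ}
    (h : spectralRadius ℂ a < ENNReal.ofReal r) : ∃ C, ∀ k, ‖a ^ k‖ ≤ C * r ^ k := by
  have hr : 0 < r := ENNReal.ofReal_pos.1 (bot_le.trans_lt h)
  have hev : ∀ᶠ k : ℕ in atTop, ‖a ^ k‖ ≤ 1 * ‖r ^ k‖ := by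
    filter_upwards [(spectrum.pow_norm_pow_one_div_tendsto_nhds_spectralRadius a).eventually_lt_const
      h, eventually_gt_atTop 0] with k hk hk0
    rw [ENNReal.ofReal_lt_ofReal_iff hr, one_div,
      Real.rpow_inv_lt_iff_of_pos (norm_nonneg _) hr.le (by positivity), Real.rpow_natCast] at hk
    rw [one_mul, Real.norm_of_nonneg (by positivity)]
    exact hk.le
  obtain ⟨C, -, hC⟩ := Asymptotics.bound_of_isBigO_nat_atTop (Asymptotics.IsBigO.of_bound 1 hev)
  refine ⟨C, fun k => ?_⟩
  simpa [abs_of_pos hr] using hC (pow_ne_zero k hr.ne')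

theorem summable_pow_mul_sum_range_of_le_geometric {f : ℕ → ℝ} {g r C : ℝ} (l₀ : ℕ)
    (hf : ∀ j, 0 ≤ f j) (hg : 0 ≤ g) (hr : 1 ≤ r) (hgr : g * r ^ l₀ < 1)
    (hfC : ∀ j, f j ≤ C * r ^ j) :
    Summable fun i : ℕ => g ^ (i + 1) * ∑ j ∈ range ((i + 1) * l₀), f j := by
  set q := g * r ^ l₀
  have hq0 : 0 ≤ q := by positivity
  have hq : Summable fun i : ℕ => ((i : ℝ) + 1) * q ^ (i + 1) := by
    have hq1 : ‖q‖ < 1 := by rwa [Real.norm_of_nonneg hq0]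
    have := (summable_nat_add_iff (f := fun i : ℕ => (i : ℝ) ^ 1 * q ^ i) 1).2
      (summable_pow_mul_geometric_of_norm_lt_one 1 hq1)
    simpa using this
  have hC : 0 ≤ C := by simpa using (hf 0).trans (hfC 0)
  refine Summable.of_nonneg_of_le (fun i => mul_nonneg (pow_nonneg hg _)
    (sum_nonneg fun j _ => hf j)) (fun i => ?_) (hq.mul_left (C * l₀))
  calc g ^ (i + 1) * ∑ j ∈ range ((i + 1) * l₀), f j
      ≤ g ^ (i + 1) * ∑ j ∈ range ((i + 1) * l₀), C * r ^ ((i + 1) * l₀) := by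
        gcongr with j hj
        exact (hfC j).trans (by gcongr; exact (mem_range.1 hj).le)
    _ = C * l₀ * (((i : ℝ) + 1) * q ^ (i + 1)) := by
        rw [sum_const, card_range, nsmul_eq_mul, mul_pow, ← pow_mul, mul_comm l₀]
        push_cast
        ring

theorem summable_pow_mul_sum_range_of_forall_lt {f : ℕ → ℝ} {g s : ℝ} (l₀ : ℕ)
    (hf : ∀ j, 0 ≤ f j) (hg : 0 ≤ g) (hg1 : g < 1) (hgs : g * s ^ l₀ < 1)
    (hfs : ∀ r > s, ∃ C, ∀ j, f j ≤ C * r ^ j) :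
    Summable fun i : ℕ => g ^ (i + 1) * ∑ j ∈ range ((i + 1) * l₀), f j := by
  have hmax : g * max s 1 ^ l₀ < 1 := by
    rcases le_total s 1 with h | h
    · simpa [max_eq_right h] using hg1
    · rwa [max_eq_left h]
  obtain ⟨r, hr, hgr⟩ :=
    (((continuous_const.mul (continuous_pow l₀)).tendsto (max s 1)).eventually_lt_const
      hmax).exists_gt
  obtain ⟨C, hC⟩ := hfs r ((le_max_left s 1).trans_lt hr)
  exact summable_pow_mul_sum_range_of_le_geometric l₀ hf hg ((le_max_right s 1).trans hr.le)
    hgr hC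

theorem one_lt_and_pos_of_one_le_mul_pow {g s : ℝ} {l₀ : ℕ} (hg : 0 ≤ g) (hg1 : g < 1)
    (hs : 0 ≤ s) (h : 1 ≤ g * s ^ l₀) : 1 < s ∧ 0 < l₀ := by
  have hpow : 1 < s ^ l₀ := by
    by_contra! h'
    nlinarith [mul_le_mul_of_nonneg_left h' hg]
  have hl₀ : 0 < l₀ := Nat.pos_of_ne_zero (by rintro rfl; simp at hpow)
  exact ⟨(one_lt_pow_iff_of_nonneg hs hl₀.ne').1 hpow, hl₀⟩

theorem not_summable_pow_mul_sum_range_of_geometric_le {f : ℕ → ℝ} {g s c : ℝ} {l₀ : ℕ}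
    (hl₀ : 0 < l₀) (hf : ∀ j, 0 ≤ f j) (hg : 0 ≤ g) (hs : 0 < s) (hc : 0 < c)
    (hgs : 1 ≤ g * s ^ l₀) (hcf : ∀ j, c * s ^ j ≤ f j) :
    ¬Summable fun i : ℕ => g ^ (i + 1) * ∑ j ∈ range ((i + 1) * l₀), f j := by
  intro hsum
  have hlow : ∀ i : ℕ, c / s ≤ g ^ (i + 1) * ∑ j ∈ range ((i + 1) * l₀), f j := by
    intro i
    obtain ⟨e, he⟩ : ∃ e, (i + 1) * l₀ = e + 1 := Nat.exists_eq_add_one.2 (by positivity)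
    rw [he, sum_range_succ, div_le_iff₀ hs]
    calc c ≤ c * (g * s ^ l₀) ^ (i + 1) := le_mul_of_one_le_right hc.le (one_le_pow₀ hgs)
      _ = g ^ (i + 1) * (c * s ^ e) * s := by
        rw [mul_pow, ← pow_mul, mul_comm l₀, he, pow_succ]; ring
      _ ≤ g ^ (i + 1) * (∑ j ∈ range e, f j + f e) * s := by
        gcongr
        linarith [hcf e, sum_nonneg fun j (_ : j ∈ range e) => hf j]
  obtain ⟨i, hi⟩ := (hsum.tendsto_atTop_zero.eventually_lt_const (div_pos hc hs)).exists
  exact (hlow i).not_gt hi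

theorem exists_pos_mul_norm_le_norm_units_mul_mul {𝓡 : Type*} [NormedRing 𝓡] (s u : 𝓡ˣ) :
    ∃ c > 0, ∀ x : 𝓡, c * ‖x‖ ≤ ‖(s : 𝓡) * x * u‖ := by
  set a := ‖((s⁻¹ : 𝓡ˣ) : 𝓡)‖ * ‖((u⁻¹ : 𝓡ˣ) : 𝓡)‖
  -- `a` itself vanishes in the zero ring, hence `a + 1`
  refine ⟨(a + 1)⁻¹, by positivity, fun x => ?_⟩
  rw [inv_mul_le_iff₀ (by positivity)]
  have hx : x = ↑s⁻¹ * (↑s * x * ↑u) * ↑u⁻¹ := by simp [mul_assoc]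
  calc ‖x‖ ≤ ‖((s⁻¹ : 𝓡ˣ) : 𝓡)‖ * ‖(s : 𝓡) * x * u‖ * ‖((u⁻¹ : 𝓡ˣ) : 𝓡)‖ := by
        conv_lhs => rw [hx]
        exact norm_mul₃_le
    _ ≤ (a + 1) * ‖(s : 𝓡) * x * u‖ := by nlinarith [norm_nonneg ((s : 𝓡) * x * u)]

section Trace

variable {ι : Type*} [Fintype ι]

theorem Matrix.trace_mul_transpose_self (X : Matrix ι ι ℝ) : (X * Xᵀ).trace = ‖X‖ ^ 2 := by
  rw [frobenius_norm_def, ← Real.rpow_natCast, ← Real.rpow_mul (by positivity)]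
  simp [Matrix.trace, Matrix.mul_apply, sq]

variable [DecidableEq ι] {Q R : Matrix ι ι ℝ}

open scoped MatrixOrder in
theorem Matrix.PosSemidef.trace_mul_mul_mul_transpose (hQ : Q.PosSemidef) (hR : R.PosSemidef)
    (M : Matrix ι ι ℝ) :
    (Q * (M * R * Mᵀ)).trace = ‖CFC.sqrt Q * M * CFC.sqrt R‖ ^ 2 := by
  have hsymm : ∀ P : Matrix ι ι ℝ, (CFC.sqrt P)ᵀ = CFC.sqrt P := fun P => by
    rw [← conjTranspose_eq_transpose_of_trivial]
    exact (CFC.sqrt_nonneg P).posSemidef.isHermitian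
  rw [← trace_mul_transpose_self, transpose_mul, transpose_mul, hsymm, hsymm]
  conv_lhs => rw [← CFC.sqrt_mul_sqrt_self Q hQ.nonneg, ← CFC.sqrt_mul_sqrt_self R hR.nonneg]
  rw [mul_assoc, trace_mul_comm]
  simp only [mul_assoc]

theorem Matrix.PosSemidef.trace_mul_mul_mul_transpose_nonneg (hQ : Q.PosSemidef)
    (hR : R.PosSemidef) (M : Matrix ι ι ℝ) : 0 ≤ (Q * (M * R * Mᵀ)).trace := by
  rw [hQ.trace_mul_mul_mul_transpose hR]
  positivity

open scoped MatrixOrder in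
theorem Matrix.PosSemidef.exists_trace_mul_mul_mul_transpose_le (hQ : Q.PosSemidef)
    (hR : R.PosSemidef) : ∃ C ≥ 0, ∀ M : Matrix ι ι ℝ, (Q * (M * R * Mᵀ)).trace ≤ C * ‖M‖ ^ 2 := by
  refine ⟨(‖CFC.sqrt Q‖ * ‖CFC.sqrt R‖) ^ 2, by positivity, fun M => ?_⟩
  rw [hQ.trace_mul_mul_mul_transpose hR]
  calc ‖CFC.sqrt Q * M * CFC.sqrt R‖ ^ 2 ≤ (‖CFC.sqrt Q‖ * ‖M‖ * ‖CFC.sqrt R‖) ^ 2 := by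
        gcongr; exact norm_mul₃_le
    _ = _ := by ring

open scoped MatrixOrder in
theorem Matrix.PosDef.exists_pos_mul_norm_sq_le_trace (hQ : Q.PosDef) (hR : R.PosDef) :
    ∃ c > 0, ∀ M : Matrix ι ι ℝ, c * ‖M‖ ^ 2 ≤ (Q * (M * R * Mᵀ)).trace := by
  have hS := (CFC.isUnit_sqrt_iff Q hQ.posSemidef.nonneg).2 hQ.isUnit
  have hU := (CFC.isUnit_sqrt_iff R hR.posSemidef.nonneg).2 hR.isUnit
  obtain ⟨c, hc, hcM⟩ := exists_pos_mul_norm_le_norm_units_mul_mul hS.unit hU.unit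
  refine ⟨c ^ 2, by positivity, fun M => ?_⟩
  rw [hQ.posSemidef.trace_mul_mul_mul_transpose hR.posSemidef, ← mul_pow]
  exact pow_le_pow_left₀ (by positivity) (hcM M) 2

end Trace

section SpectralRadius

variable {n : ℕ}

theorem Matrix.norm_map_ofReal_pow (A : Matrix (Fin n) (Fin n) ℝ) (k : ℕ) :
    ‖(A.map Complex.ofReal) ^ k‖ = ‖A ^ k‖ := by
  rw [← frobenius_norm_map_eq (A ^ k) Complex.ofReal Complex.norm_real]
  exact congrArg norm (map_pow Complex.ofRealHom.mapMatrix A k).symm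

theorem specRad_nonneg (A : Matrix (Fin n) (Fin n) ℝ) : 0 ≤ specRad A :=
  Real.sSup_nonneg (by rintro _ ⟨z, -, rfl⟩; exact norm_nonneg z)

theorem ofReal_specRad (A : Matrix (Fin n) (Fin n) ℝ) :
    ENNReal.ofReal (specRad A) = spectralRadius ℂ (A.map Complex.ofReal) := by
  rcases (spectrum ℂ (A.map Complex.ofReal)).eq_empty_or_nonempty with h | h
  · simp [specRad, spectralRadius, h]
  obtain ⟨μ, hμ, hμr⟩ := spectrum.exists_nnnorm_eq_spectralRadius_of_nonempty h
  have hmax : IsGreatest ((fun z : ℂ => ‖z‖) '' spectrum ℂ (A.map Complex.ofReal)) ‖μ‖ := by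
    refine ⟨⟨μ, hμ, rfl⟩, ?_⟩
    rintro _ ⟨ν, hν, rfl⟩
    have : (‖ν‖₊ : ENNReal) ≤ ‖μ‖₊ := hμr ▸ le_iSup₂ (α := ENNReal) ν hν
    exact_mod_cast this
  rw [specRad, hmax.csSup_eq, ← hμr, ofReal_norm]
  rfl

theorem exists_pos_mul_specRad_pow_le_norm_pow {A : Matrix (Fin n) (Fin n) ℝ}
    (hA : 0 < specRad A) : ∃ c > 0, ∀ k, c * specRad A ^ k ≤ ‖A ^ k‖ := by
  have hne : (spectrum ℂ (A.map Complex.ofReal)).Nonempty := by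
    by_contra h
    simp [specRad, Set.not_nonempty_iff_eq_empty.1 h] at hA
  obtain ⟨μ, hμ, hμr⟩ := spectrum.exists_nnnorm_eq_spectralRadius_of_nonempty hne
  have hμρ : ‖μ‖ = specRad A := by
    rw [← ENNReal.ofReal_eq_ofReal_iff (norm_nonneg μ) (specRad_nonneg A), ofReal_norm,
      ofReal_specRad]
    exact hμr
  set K := ‖(1 : Matrix (Fin n) (Fin n) ℂ)‖
  have key : ∀ k, specRad A ^ k ≤ ‖A ^ k‖ * K := fun k => by
    rw [← hμρ, ← norm_pow, ← A.norm_map_ofReal_pow]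
    exact spectrum.norm_le_norm_mul_of_mem (spectrum.pow_mem_pow _ k hμ)
  have hK : 0 < K := by
    have h0 := key 0
    rw [pow_zero, pow_zero] at h0
    exact pos_of_mul_pos_right (one_pos.trans_le h0) (norm_nonneg _)
  refine ⟨K⁻¹, inv_pos.2 hK, fun k => ?_⟩
  rw [inv_mul_le_iff₀ hK, mul_comm]
  exact key k

theorem exists_norm_pow_le_mul_pow_of_specRad_lt {A : Matrix (Fin n) (Fin n) ℝ} {r : ℝ}
    (h : specRad A < r) : ∃ C, ∀ k, ‖A ^ k‖ ≤ C * r ^ k := by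
  simp_rw [← A.norm_map_ofReal_pow]
  refine spectrum.exists_norm_pow_le_mul_pow_of_spectralRadius_lt ?_
  rw [← ofReal_specRad]
  exact (ENNReal.ofReal_lt_ofReal_iff ((specRad_nonneg A).trans_lt h)).2 h


variable {A Q R : Matrix (Fin n) (Fin n) ℝ}

theorem exists_pos_mul_pow_le_trace (hQ : Q.PosDef) (hR : R.PosDef) (hA : 0 < specRad A) :
    ∃ c > 0, ∀ j, c * (specRad A ^ 2) ^ j ≤ (Q * (A ^ j * R * (A ^ j)ᵀ)).trace := by
  obtain ⟨c, hc, hcA⟩ := exists_pos_mul_specRad_pow_le_norm_pow hA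
  obtain ⟨c₁, hc₁, hc₁M⟩ := hQ.exists_pos_mul_norm_sq_le_trace hR
  refine ⟨c₁ * c ^ 2, by positivity, fun j => ?_⟩
  calc c₁ * c ^ 2 * (specRad A ^ 2) ^ j = c₁ * (c * specRad A ^ j) ^ 2 := by ring
    _ ≤ c₁ * ‖A ^ j‖ ^ 2 := by gcongr; exact hcA j
    _ ≤ _ := hc₁M _

theorem exists_trace_le_mul_pow_of_sq_specRad_lt (hQ : Q.PosSemidef) (hR : R.PosSemidef)
    {r : ℝ} (h : specRad A ^ 2 < r) :
    ∃ C, ∀ j, (Q * (A ^ j * R * (A ^ j)ᵀ)).trace ≤ C * r ^ j := by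
  obtain ⟨C, hC⟩ := exists_norm_pow_le_mul_pow_of_specRad_lt
    ((Real.lt_sqrt (specRad_nonneg A)).2 h)
  obtain ⟨C₂, hC₂, hC₂M⟩ := hQ.exists_trace_mul_mul_mul_transpose_le hR
  refine ⟨C₂ * C ^ 2, fun j => ?_⟩
  calc _ ≤ C₂ * ‖A ^ j‖ ^ 2 := hC₂M _
    _ ≤ C₂ * (C * √r ^ j) ^ 2 := by gcongr; exact hC j
    _ = C₂ * C ^ 2 * r ^ j := by
      rw [mul_pow, ← pow_mul, mul_comm j, pow_mul, Real.sq_sqrt ((sq_nonneg _).trans h.le)]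
      ring

end SpectralRadius

theorem trace_mul_covH {n : ℕ} (A R Q : Matrix (Fin n) (Fin n) ℝ) (d : ℕ) :
    (Q * covH A R d).trace = ∑ j ∈ range d, (Q * (A ^ j * R * (A ^ j)ᵀ)).trace := by
  rw [covH, mul_sum, trace_sum]

theorem subsampled_discounted_cost_summable_iff_general {n : ℕ}
    (A R Q : Matrix (Fin n) (Fin n) ℝ)
    (hR : R.PosDef) (hQ : Q.PosDef)
    (g : ℝ) (hg : g ∈ Set.Ioo (0 : ℝ) 1) (l₀ : ℕ) :
    Summable (fun i : ℕ => g ^ (i + 1) * (Q * covH A R ((i + 1) * l₀)).trace) ↔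
      g * specRad A ^ (2 * l₀) < 1 := by
  obtain ⟨hg0, hg1⟩ := hg
  have hf (j : ℕ) : 0 ≤ (Q * (A ^ j * R * (A ^ j)ᵀ)).trace :=
    hQ.posSemidef.trace_mul_mul_mul_transpose_nonneg hR.posSemidef _
  simp only [trace_mul_covH, pow_mul]
  constructor
  · intro hsum
    by_contra! hge
    obtain ⟨hρ, hl₀⟩ := one_lt_and_pos_of_one_le_mul_pow hg0.le hg1 (sq_nonneg _) hge
    obtain ⟨c, hc, hcf⟩ := exists_pos_mul_pow_le_trace hQ hR (A := A)
      (by nlinarith [specRad_nonneg A])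
    exact not_summable_pow_mul_sum_range_of_geometric_le hl₀ hf hg0.le (by positivity) hc hge
      hcf hsum
  · exact fun hlt => summable_pow_mul_sum_range_of_forall_lt l₀ hf hg0.le hg1 hlt
      fun r hr => exists_trace_le_mul_pow_of_sq_specRad_lt hQ.posSemidef hR.posSemidef hr

/-- subsampled convergence criterion: for `R, Q` positive definite,
`g ∈ (0,1)` and `l₀ ≥ 1`, the series `∑_{i=1}^∞ gⁱ Tr(Q·H(i·l₀))` converges iff
`g·ρ(A)^(2l₀) < 1`. -/
theorem subsampled_discounted_cost_summable_iff {n : ℕ}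
    (A R Q : Matrix (Fin n) (Fin n) ℝ)
    (hR : R.PosDef) (hQ : Q.PosDef)
    (g : ℝ) (hg : g ∈ Set.Ioo (0 : ℝ) 1) (l₀ : ℕ) (hl₀ : 1 ≤ l₀) :
    Summable (fun i : ℕ => g ^ (i + 1) * (Q * covH A R ((i + 1) * l₀)).trace) ↔
      g * specRad A ^ (2 * l₀) < 1 :=
  subsampled_discounted_cost_summable_iff_general A R Q hR hQ g hg l₀
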